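/- Bind lemma for effect-indexed predicate liftings (the abstract content of the derived monadic typing rule t-do-lift): let M : Type u → Type u be a lawful monad, E a type with a binary operation ∨, and Λ a family of predicate liftings for M indexed by E such that each Λ^e is natural and monotone and the family satisfies the multiplication condition. Then for all e e' : E, A : Set X, B : Set Y, f : X → M Y with f x ∈ Λ^{e'}_Y B for every x ∈ A, and every α : M X with α ∈ Λ^e_X A, one has α >>= f ∈ Λ^{e ∨ e'}_Y B. -/
import Mathlib


universe u v

/-- Bind lemma for effect-indexed predicate liftings (the abstract content of the
derived monadic typing rule t-do-lift). -/
theorem predicate_lifting_bind {M : Type u → Type u} [Monad M] [LawfulMonad M]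
    {E : Type v} (vee : E → E → E)
    (Λ : E → ∀ X : Type u, Set X → Set (M X))
    (hnat : ∀ (e : E) {X Y : Type u} (f : X → Y) (A : Set Y),
      Λ e X (f ⁻¹' A) = (Functor.map f) ⁻¹' (Λ e Y A))
    (hmono : ∀ (e : E) {X : Type u} (A B : Set X), A ⊆ B → Λ e X A ⊆ Λ e X B)
    (hmul : ∀ (e e' : E) (X : Type u) (A : Set X),
      Λ e (M X) (Λ e' X A) ⊆ {m : M (M X) | m >>= id ∈ Λ (vee e e') X A})
    (e e' : E) {X Y : Type u} (A : Set X) (B : Set Y)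
    (f : X → M Y) (hf : ∀ x ∈ A, f x ∈ Λ e' Y B)
    (α : M X) (hα : α ∈ Λ e X A) :
    α >>= f ∈ Λ (vee e e') Y B := by
  have h1 : α ∈ Λ e X (f ⁻¹' Λ e' Y B) := hmono e A _ hf hα
  rw [hnat] at h1
  have h2 := hmul e e' Y B h1
  simpa [bind_map_left] using h2
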